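/- Let H be a Hilbert space with a direct sum decomposition indexed by a set I, and suppose H has infinite multiplicity in the sense that H ≅ H ⊕ K_i (as unitary equivalence of representations) for each i ∈ I, where K_i ⊆ H are subspaces whose union is cyclic. If H embeds into ⊕_i K_i, then H ≅ ⊕_i K_i. -/

import Mathlib

/-! Write `X = ⊕ᵢ Kᵢ`. Infinite multiplicity and absorption give the swindle
`H ≅ ⊕ᵢ H ≅ ⊕ᵢ (H ⊕ Kᵢ) ≅ (⊕ᵢ H) ⊕ X ≅ H ⊕ X`, and splitting `ι ≃ ι ⊕ ι` gives `H ⊕ H ≅ H`.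
As the actions are closed under adjoints, the orthogonal complement `L` of the image of `H` in `X`
is invariant, so `X ≅ H ⊕ L`. Hence `H ≅ H ⊕ X ≅ (H ⊕ H) ⊕ L ≅ H ⊕ L ≅ X`. -/

noncomputable section

open Function

section

variable {𝕜 : Type*} [RCLike 𝕜]

theorem WithLp.norm_toLp_le_add {α β : Type*} [SeminormedAddCommGroup α]
    [SeminormedAddCommGroup β] (a : α) (b : β) : ‖toLp 2 (a, b)‖ ≤ ‖a‖ + ‖b‖ := by
  have : toLp 2 (a, b) = toLp 2 (a, 0) + toLp 2 (0, b) := by simp [← WithLp.toLp_add]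
  rw [this, ← norm_toLp_fst 2 α β a, ← norm_toLp_snd 2 α β b]
  exact norm_add_le _ _

@[ext]
theorem WithLp.prod_ext {p : ENNReal} {α β : Type*} {x y : WithLp p (α × β)}
    (h₁ : x.fst = y.fst) (h₂ : x.snd = y.snd) : x = y :=
  (WithLp.ext_iff p).2 (Prod.ext h₁ h₂)

section UnitarilyEquivalent
variable {A E F G E' F' : Type*}
  [NormedAddCommGroup E] [InnerProductSpace 𝕜 E] [NormedAddCommGroup F] [InnerProductSpace 𝕜 F]
  [NormedAddCommGroup G] [InnerProductSpace 𝕜 G] [NormedAddCommGroup E'] [InnerProductSpace 𝕜 E']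
  [NormedAddCommGroup F'] [InnerProductSpace 𝕜 F']

variable (𝕜) in
def UnitarilyEquivalent (ρ : A → E → E) (σ : A → F → F) : Prop :=
  ∃ e : E ≃ₗᵢ[𝕜] F, ∀ a, Semiconj e (ρ a) (σ a)

def prodAction (ρ : A → E → E) (σ : A → F → F) (a : A) : WithLp 2 (E × F) → WithLp 2 (E × F) :=
  WithLp.map 2 (Prod.map (ρ a) (σ a))

namespace UnitarilyEquivalent

variable {ρ : A → E → E} {σ : A → F → F} {τ : A → G → G} {ρ' : A → E' → E'} {σ' : A → F' → F'}

theorem refl (ρ : A → E → E) : UnitarilyEquivalent 𝕜 ρ ρ :=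
  ⟨.refl 𝕜 E, fun _ => Semiconj.id_left⟩

theorem symm (h : UnitarilyEquivalent 𝕜 ρ σ) : UnitarilyEquivalent 𝕜 σ ρ :=
  let ⟨e, he⟩ := h
  ⟨e.symm, fun a => (he a).inverse_left e.left_inv e.right_inv⟩

theorem trans (h : UnitarilyEquivalent 𝕜 ρ σ) (h' : UnitarilyEquivalent 𝕜 σ τ) :
    UnitarilyEquivalent 𝕜 ρ τ :=
  let ⟨e, he⟩ := h
  let ⟨e', he'⟩ := h'
  ⟨e.trans e', fun a => (he a).trans (he' a)⟩

theorem prodCongr (h : UnitarilyEquivalent 𝕜 ρ ρ') (h' : UnitarilyEquivalent 𝕜 σ σ') :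
    UnitarilyEquivalent 𝕜 (prodAction ρ σ) (prodAction ρ' σ') :=
  let ⟨e, he⟩ := h
  let ⟨e', he'⟩ := h'
  ⟨.withLpProdCongr 2 e e', fun a p => by ext <;> simp [prodAction, he a p.fst, he' a p.snd]⟩

theorem prodAssoc :
    UnitarilyEquivalent 𝕜 (prodAction (prodAction ρ σ) τ) (prodAction ρ (prodAction σ τ)) :=
  ⟨.withLpProdAssoc 2 𝕜 E F G, fun _ _ => rfl⟩

end UnitarilyEquivalent

end UnitarilyEquivalent

section lp
variable {ι : Type*} {G E F : ι → Type*}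
  [∀ i, NormedAddCommGroup (G i)] [∀ i, InnerProductSpace 𝕜 (G i)]
  [∀ i, NormedAddCommGroup (E i)] [∀ i, InnerProductSpace 𝕜 (E i)]
  [∀ i, NormedAddCommGroup (F i)] [∀ i, InnerProductSpace 𝕜 (F i)]

def lpProdEquiv (e : ∀ i, G i ≃ₗᵢ[𝕜] WithLp 2 (E i × F i)) :
    lp G 2 ≃ₗᵢ[𝕜] WithLp 2 (lp E 2 × lp F 2) :=
  LinearEquiv.isometryOfInner
    { toFun ξ := WithLp.toLp 2
        (⟨fun i => (e i (ξ i)).fst, (lp.memℓp ξ).mono' fun i =>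
          (WithLp.norm_fst_le _ _).trans_eq ((e i).norm_map _)⟩,
         ⟨fun i => (e i (ξ i)).snd, (lp.memℓp ξ).mono' fun i =>
          (WithLp.norm_snd_le _ _).trans_eq ((e i).norm_map _)⟩)
      invFun p := ⟨fun i => (e i).symm (WithLp.toLp 2 (p.fst i, p.snd i)),
        ((lp.memℓp p.fst).norm.add (lp.memℓp p.snd).norm).mono fun i => by
          rw [LinearIsometryEquiv.norm_map]; exact WithLp.norm_toLp_le_add _ _⟩
      map_add' ξ η := by
        ext i
        exacts [congrArg WithLp.fst (map_add (e i) (ξ i) (η i)),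
          congrArg WithLp.snd (map_add (e i) (ξ i) (η i))]
      map_smul' c ξ := by
        ext i
        exacts [congrArg WithLp.fst (map_smul (e i) c (ξ i)),
          congrArg WithLp.snd (map_smul (e i) c (ξ i))]
      left_inv ξ := by ext i; exact (e i).symm_apply_apply (ξ i)
      right_inv p := by
        ext i
        exacts [congrArg WithLp.fst ((e i).apply_symm_apply _),
          congrArg WithLp.snd ((e i).apply_symm_apply _)] }
    fun ξ η => by
      rw [WithLp.prod_inner_apply, lp.inner_eq_tsum, lp.inner_eq_tsum,
        ← Summable.tsum_add (lp.summable_inner _ _) (lp.summable_inner _ _), lp.inner_eq_tsum]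
      refine tsum_congr fun i => ?_
      rw [← (e i).inner_map_map, WithLp.prod_inner_apply]
      rfl

@[simp]
theorem lpProdEquiv_fst_apply (e : ∀ i, G i ≃ₗᵢ[𝕜] WithLp 2 (E i × F i)) (ξ : lp G 2) (i : ι) :
    (lpProdEquiv e ξ).fst i = (e i (ξ i)).fst := rfl

@[simp]
theorem lpProdEquiv_snd_apply (e : ∀ i, G i ≃ₗᵢ[𝕜] WithLp 2 (E i × F i)) (ξ : lp G 2) (i : ι) :
    (lpProdEquiv e ξ).snd i = (e i (ξ i)).snd := rfl

theorem semiconj_lpProdEquiv (e : ∀ i, G i ≃ₗᵢ[𝕜] WithLp 2 (E i × F i))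
    {R : ∀ i, G i → G i} {S : ∀ i, E i → E i} {T : ∀ i, F i → F i}
    (he : ∀ i, Semiconj (e i) (R i) (WithLp.map 2 (Prod.map (S i) (T i))))
    {DR : lp G 2 → lp G 2} {DS : lp E 2 → lp E 2} {DT : lp F 2 → lp F 2}
    (hDR : ∀ ξ i, DR ξ i = R i (ξ i)) (hDS : ∀ ξ i, DS ξ i = S i (ξ i))
    (hDT : ∀ ξ i, DT ξ i = T i (ξ i)) :
    Semiconj (lpProdEquiv e) DR (WithLp.map 2 (Prod.map DS DT)) := fun ξ => by
  ext i
  · simp [hDR, hDS, he i (ξ i)]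
  · simp [hDR, hDT, he i (ξ i)]

end lp

section lpSum
variable {α β γ : Type*} {E : Type*} [NormedAddCommGroup E] [InnerProductSpace 𝕜 E]

def lpSumEquiv (q : α ⊕ β ≃ γ) :
    lp (fun _ : γ => E) 2 ≃ₗᵢ[𝕜] WithLp 2 (lp (fun _ : α => E) 2 × lp (fun _ : β => E) 2) :=
  LinearEquiv.isometryOfInner
    { toFun ξ := WithLp.toLp 2
        (⟨fun a => ξ (q (.inl a)), memℓp_gen <| ((lp.memℓp ξ).summable (by norm_num)).comp_injective
          (q.injective.comp Sum.inl_injective)⟩,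
         ⟨fun b => ξ (q (.inr b)), memℓp_gen <| ((lp.memℓp ξ).summable (by norm_num)).comp_injective
          (q.injective.comp Sum.inr_injective)⟩)
      invFun p := ⟨fun c => Sum.elim p.fst p.snd (q.symm c), memℓp_gen <|
        (q.symm.summable_iff (f := fun s => ‖Sum.elim p.fst p.snd s‖ ^ (2 : ENNReal).toReal)).2 <|
          Summable.sum _ ((lp.memℓp p.fst).summable (by norm_num))
            ((lp.memℓp p.snd).summable (by norm_num))⟩
      map_add' ξ η := rfl
      map_smul' c ξ := rfl
      left_inv ξ := by
        ext c
        obtain ⟨s | s, rfl⟩ := q.surjective c <;> simp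
      right_inv p := by ext a <;> simp }
    fun ξ η => by
      rw [WithLp.prod_inner_apply, lp.inner_eq_tsum, lp.inner_eq_tsum, lp.inner_eq_tsum,
        ← q.tsum_eq, Summable.tsum_sum]
      · rfl
      · exact (q.summable_iff.2 (lp.summable_inner (𝕜 := 𝕜) ξ η)).comp_injective Sum.inl_injective
      · exact (q.summable_iff.2 (lp.summable_inner (𝕜 := 𝕜) ξ η)).comp_injective Sum.inr_injective

@[simp]
theorem lpSumEquiv_fst_apply (q : α ⊕ β ≃ γ) (ξ : lp (fun _ : γ => E) 2) (a : α) :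
    (lpSumEquiv (𝕜 := 𝕜) q ξ).fst a = ξ (q (.inl a)) := rfl

@[simp]
theorem lpSumEquiv_snd_apply (q : α ⊕ β ≃ γ) (ξ : lp (fun _ : γ => E) 2) (b : β) :
    (lpSumEquiv (𝕜 := 𝕜) q ξ).snd b = ξ (q (.inr b)) := rfl

theorem semiconj_lpSumEquiv (q : α ⊕ β ≃ γ) {T : E → E} {Dγ : lp (fun _ : γ => E) 2 → lp _ 2}
    {Dα : lp (fun _ : α => E) 2 → lp _ 2} {Dβ : lp (fun _ : β => E) 2 → lp _ 2}
    (hDγ : ∀ ξ c, Dγ ξ c = T (ξ c)) (hDα : ∀ ξ a, Dα ξ a = T (ξ a))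
    (hDβ : ∀ ξ b, Dβ ξ b = T (ξ b)) :
    Semiconj (lpSumEquiv (𝕜 := 𝕜) q) Dγ (WithLp.map 2 (Prod.map Dα Dβ)) := fun ξ => by
  ext i
  · simp [hDγ, hDα]
  · simp [hDγ, hDβ]

end lpSum

section orthogonal
variable {E X : Type*} [NormedAddCommGroup E] [InnerProductSpace 𝕜 E]
  [NormedAddCommGroup X] [InnerProductSpace 𝕜 X] (j : E →ₗᵢ[𝕜] X)

theorem LinearIsometry.apply_mem_orthogonal_range [CompleteSpace X] {A : Type*} {ρ : A → E → E}
    {T : A → X →L[𝕜] X} (hj : ∀ a, Semiconj j (ρ a) (T a))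
    (hT : ∀ a, ∃ b, ContinuousLinearMap.adjoint (T a) = T b) (a : A) :
    ∀ w ∈ (LinearMap.range j.toLinearMap)ᗮ, T a w ∈ (LinearMap.range j.toLinearMap)ᗮ := by
  refine (Module.End.mem_invtSubmodule_iff_forall_mem_of_mem _).1
    (ContinuousLinearMap.orthogonal_mem_invtSubmodule ?_)
  obtain ⟨b, hb⟩ := hT a
  rw [hb, Module.End.mem_invtSubmodule_iff_forall_mem_of_mem]
  rintro _ ⟨x, rfl⟩
  exact ⟨ρ b x, hj b x⟩

variable [CompleteSpace E]

instance LinearIsometry.completeSpace_range : CompleteSpace (LinearMap.range j.toLinearMap) :=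
  j.equivRange.symm.toIsometryEquiv.completeSpace

def LinearIsometry.prodOrthogonalRangeEquiv :
    WithLp 2 (E × (LinearMap.range j.toLinearMap)ᗮ) ≃ₗᵢ[𝕜] X :=
  (LinearIsometryEquiv.withLpProdCongr 2 j.equivRange (.refl 𝕜 _)).trans
    (LinearMap.range j.toLinearMap).orthogonalDecomposition.symm

theorem LinearIsometry.prodOrthogonalRangeEquiv_apply
    (p : WithLp 2 (E × (LinearMap.range j.toLinearMap)ᗮ)) :
    j.prodOrthogonalRangeEquiv p = j p.fst + p.snd := rfl

theorem LinearIsometry.semiconj_prodOrthogonalRangeEquiv {S : E → E} {T : X →ₗ[𝕜] X}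
    (hj : Semiconj j S T) (hT : ∀ w ∈ (LinearMap.range j.toLinearMap)ᗮ,
      T w ∈ (LinearMap.range j.toLinearMap)ᗮ) :
    Semiconj j.prodOrthogonalRangeEquiv (WithLp.map 2 (Prod.map S (T.restrict hT))) T := fun p => by
  simp [prodOrthogonalRangeEquiv_apply, hj p.fst]

theorem LinearIsometry.unitarilyEquivalent_prodOrthogonalRange [CompleteSpace X] {A : Type*}
    {ρ : A → E → E} {T : A → X →L[𝕜] X} (hj : ∀ a, Semiconj j (ρ a) (T a))
    (hT : ∀ a, ∃ b, ContinuousLinearMap.adjoint (T a) = T b) :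
    UnitarilyEquivalent 𝕜
      (prodAction ρ fun a => (T a : X →ₗ[𝕜] X).restrict (j.apply_mem_orthogonal_range hj hT a))
      fun a => T a :=
  ⟨j.prodOrthogonalRangeEquiv, fun a => j.semiconj_prodOrthogonalRangeEquiv (hj a) _⟩

end orthogonal

theorem lp.adjoint_eq_of_forall_apply {ι : Type*} {E : ι → Type*} [∀ i, NormedAddCommGroup (E i)]
    [∀ i, InnerProductSpace 𝕜 (E i)] [∀ i, CompleteSpace (E i)] {T T' : ∀ i, E i →L[𝕜] E i}
    (hT' : ∀ i, T' i = ContinuousLinearMap.adjoint (T i)) {D D' : lp E 2 →L[𝕜] lp E 2}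
    (hD : ∀ ξ i, D ξ i = T i (ξ i)) (hD' : ∀ ξ i, D' ξ i = T' i (ξ i)) :
    ContinuousLinearMap.adjoint D = D' := by
  refine ((ContinuousLinearMap.eq_adjoint_iff D' D).2 fun ξ η => ?_).symm
  simp only [lp.inner_eq_tsum, hD, hD', hT', ContinuousLinearMap.adjoint_inner_left]

section Swindle
variable {A ι H : Type*} [NormedAddCommGroup H] [InnerProductSpace 𝕜 H] {ρ : A → H → H}
  {DH : A → lp (fun _ : ι => H) 2 → lp (fun _ : ι => H) 2}

theorem UnitarilyEquivalent.prod_lp_of_absorbs {K : ι → Type*} [∀ i, NormedAddCommGroup (K i)]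
    [∀ i, InnerProductSpace 𝕜 (K i)] {σ : ∀ i, A → K i → K i} {D : A → lp K 2 → lp K 2}
    (hDH : ∀ a ξ i, DH a ξ i = ρ a (ξ i)) (hD : ∀ a ξ i, D a ξ i = σ i a (ξ i))
    (hinf : UnitarilyEquivalent 𝕜 DH ρ)
    (habs : ∀ i, UnitarilyEquivalent 𝕜 (prodAction ρ (σ i)) ρ) :
    UnitarilyEquivalent 𝕜 ρ (prodAction ρ D) := by
  choose f hf using habs
  have hsplit : UnitarilyEquivalent 𝕜 DH (prodAction DH D) :=
    ⟨lpProdEquiv fun i => (f i).symm, fun a =>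
      semiconj_lpProdEquiv _ (fun i => (hf i a).inverse_left (f i).left_inv (f i).right_inv)
        (hDH a) (hDH a) (hD a)⟩
  exact hinf.symm.trans (hsplit.trans (hinf.prodCongr (.refl D)))

theorem UnitarilyEquivalent.prod_self_of_lp (q : ι ⊕ ι ≃ ι)
    (hDH : ∀ a ξ i, DH a ξ i = ρ a (ξ i)) (hinf : UnitarilyEquivalent 𝕜 DH ρ) :
    UnitarilyEquivalent 𝕜 (prodAction ρ ρ) ρ :=
  have hsplit : UnitarilyEquivalent 𝕜 DH (prodAction DH DH) :=
    ⟨lpSumEquiv q, fun a => semiconj_lpSumEquiv q (hDH a) (hDH a) (hDH a)⟩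
  (hinf.symm.prodCongr hinf.symm).trans (hsplit.symm.trans hinf)

end Swindle

end

theorem stmt16_general {ι : Type*} [Infinite ι] {A : Type*}
    {H : Type*} [NormedAddCommGroup H] [InnerProductSpace ℂ H] [CompleteSpace H]
    {K : ι → Type*} [∀ i, NormedAddCommGroup (K i)] [∀ i, InnerProductSpace ℂ (K i)]
    [∀ i, CompleteSpace (K i)]
    (ρ : A → (H →L[ℂ] H)) (σ : ∀ i, A → (K i →L[ℂ] K i))
    -- the operator set is closed under adjoints
    (st : A → A)
    (hstσ : ∀ i a, σ i (st a) = ContinuousLinearMap.adjoint (σ i a))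
    -- the diagonal action on `⊕ᵢ K i`
    (D : A → (lp (fun i => K i) 2 →L[ℂ] lp (fun i => K i) 2))
    (hD : ∀ a ξ i, (D a ξ : ∀ i, K i) i = σ i a ((ξ : ∀ i, K i) i))
    -- the diagonal action on `⊕ᵢ H`
    (DH : A → (lp (fun _ : ι => H) 2 →L[ℂ] lp (fun _ : ι => H) 2))
    (hDH : ∀ a ξ i, (DH a ξ : ∀ _ : ι, H) i = ρ a ((ξ : ∀ _ : ι, H) i))
    -- infinite multiplicity: `H ≅ ⊕ᵢ H` equivariantly
    (hinf : ∃ e : lp (fun _ : ι => H) 2 ≃ₗᵢ[ℂ] H, ∀ a ξ, e (DH a ξ) = ρ a (e ξ))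
    -- absorption: `H ⊕ K i ≅ H` equivariantly for each `i`
    (habs : ∀ i, ∃ e : WithLp 2 (H × K i) ≃ₗᵢ[ℂ] H, ∀ a p,
      e ((WithLp.equiv 2 (H × K i)).symm
          (ρ a ((WithLp.equiv 2 (H × K i)) p).1, σ i a ((WithLp.equiv 2 (H × K i)) p).2))
        = ρ a (e p))
    -- `H` embeds into `⊕ᵢ K i` as a subrepresentation
    (hemb : ∃ j : H →ₗᵢ[ℂ] lp (fun i => K i) 2, ∀ a x, j (ρ a x) = D a (j x)) :
    ∃ e : H ≃ₗᵢ[ℂ] lp (fun i => K i) 2, ∀ a x, e (ρ a x) = D a (e x) := by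
  obtain ⟨j, hj⟩ := hemb
  have hDadj : ∀ a, ∃ b, ContinuousLinearMap.adjoint (D a) = D b := fun a =>
    ⟨st a, lp.adjoint_eq_of_forall_apply (hstσ · a) (hD a) (hD (st a))⟩
  have hX := j.unitarilyEquivalent_prodOrthogonalRange hj hDadj
  have hHX := UnitarilyEquivalent.prod_lp_of_absorbs hDH hD hinf habs
  obtain ⟨q⟩ : Nonempty (ι ⊕ ι ≃ ι) := Cardinal.eq.1 <| by
    rw [Cardinal.mk_sum, Cardinal.lift_id, Cardinal.add_eq_self (Cardinal.aleph0_le_mk ι)]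
  have hHH := UnitarilyEquivalent.prod_self_of_lp q hDH hinf
  exact hHX.trans (((UnitarilyEquivalent.refl _).prodCongr hX.symm).trans
    (UnitarilyEquivalent.prodAssoc.symm.trans ((hHH.prodCongr (.refl _)).trans hX)))

/-- Eilenberg-swindle, Lemma 3.3: let `H` and `K i` (`i ∈ ι`, `ι`
infinite) be Hilbert spaces carrying representations `ρ`, `σ i` of a fixed index type
`A` of operators closed under adjoints, and let `D`/`DH` denote the diagonal actions on
the Hilbert direct sums `⊕ᵢ K i` and `⊕ᵢ H`.  If `H` has infinite multiplicity in the
sense that `H ≅ ⊕ᵢ H` and `H ⊕ K i ≅ H` equivariantly for every `i`, and `H` embeds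
equivariantly and isometrically into `⊕ᵢ K i` (as a subrepresentation), then
`H ≅ ⊕ᵢ K i` equivariantly. -/
theorem stmt16 {ι : Type*} [Infinite ι] {A : Type*}
    {H : Type*} [NormedAddCommGroup H] [InnerProductSpace ℂ H] [CompleteSpace H]
    {K : ι → Type*} [∀ i, NormedAddCommGroup (K i)] [∀ i, InnerProductSpace ℂ (K i)]
    [∀ i, CompleteSpace (K i)]
    (ρ : A → (H →L[ℂ] H)) (σ : ∀ i, A → (K i →L[ℂ] K i))
    -- the operator set is closed under adjoints
    (st : A → A)
    (hstρ : ∀ a, ρ (st a) = ContinuousLinearMap.adjoint (ρ a))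
    (hstσ : ∀ i a, σ i (st a) = ContinuousLinearMap.adjoint (σ i a))
    -- the diagonal action on `⊕ᵢ K i`
    (D : A → (lp (fun i => K i) 2 →L[ℂ] lp (fun i => K i) 2))
    (hD : ∀ a ξ i, (D a ξ : ∀ i, K i) i = σ i a ((ξ : ∀ i, K i) i))
    -- the diagonal action on `⊕ᵢ H`
    (DH : A → (lp (fun _ : ι => H) 2 →L[ℂ] lp (fun _ : ι => H) 2))
    (hDH : ∀ a ξ i, (DH a ξ : ∀ _ : ι, H) i = ρ a ((ξ : ∀ _ : ι, H) i))
    -- infinite multiplicity: `H ≅ ⊕ᵢ H` equivariantly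
    (hinf : ∃ e : lp (fun _ : ι => H) 2 ≃ₗᵢ[ℂ] H, ∀ a ξ, e (DH a ξ) = ρ a (e ξ))
    -- absorption: `H ⊕ K i ≅ H` equivariantly for each `i`
    (habs : ∀ i, ∃ e : WithLp 2 (H × K i) ≃ₗᵢ[ℂ] H, ∀ a p,
      e ((WithLp.equiv 2 (H × K i)).symm
          (ρ a ((WithLp.equiv 2 (H × K i)) p).1, σ i a ((WithLp.equiv 2 (H × K i)) p).2))
        = ρ a (e p))
    -- `H` embeds into `⊕ᵢ K i` as a subrepresentation
    (hemb : ∃ j : H →ₗᵢ[ℂ] lp (fun i => K i) 2, ∀ a x, j (ρ a x) = D a (j x)) :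
    ∃ e : H ≃ₗᵢ[ℂ] lp (fun i => K i) 2, ∀ a x, e (ρ a x) = D a (e x) :=
  stmt16_general ρ σ st hstσ D hD DH hDH hinf habs hemb

end
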